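/- arXiv:2102.06387 — 4 statements merged into one kernel-verified Lean document; each statement's English description precedes it below -/
import Mathlib

section
/- For any r > 0, any x ∈ ℝ, and any t ≥ log 2, the modular clipping error satisfies |M_{[-r,r]}(x) − x| ≤ 2r·(exp((t/2)·(x/r − 1)) + exp((t/2)·(−x/r − 1))). -/
/-! Write `y - x = 2 r n` and `k = |n|`. Since `|y| ≤ r`, the point `x` lies at distance at least
`(2k - 1) r` from the origin, so the exponent `(t/2)(|x|/r - 1)` is at least `(k - 1) t`. For
`t ≥ log 2` this gives `exp ((t/2)(|x|/r - 1)) ≥ 2 ^ (k - 1) ≥ k`, and the larger of the two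
exponentials in the bound is `exp ((t/2)(|x|/r - 1))`. -/

open Real

lemma le_apply_add_apply_neg_of_nonneg {g : ℝ → ℝ} (hg : ∀ z, 0 ≤ g z) (a : ℝ) :
    g |a| ≤ g a + g (-a) := by
  rcases abs_choice a with h | h <;> rw [h] <;> linarith [hg a, hg (-a)]

lemma natCast_le_two_pow_pred (k : ℕ) : (k : ℝ) ≤ 2 ^ (k - 1) := by
  have : k ≤ 2 ^ (k - 1) := by have := Nat.lt_two_pow_self (n := k - 1); omega
  exact_mod_cast this

lemma natCast_le_exp_mul_sub_one {t : ℝ} (ht : log 2 ≤ t) (k : ℕ) :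
    (k : ℝ) ≤ exp (t * (k - 1)) := by
  rcases Nat.eq_zero_or_pos k with rfl | hk
  · simpa using (exp_pos _).le
  have hk1 : (0 : ℝ) ≤ k - 1 := by
    rw [sub_nonneg]; exact_mod_cast hk
  calc (k : ℝ) ≤ 2 ^ (k - 1) := natCast_le_two_pow_pred k
    _ = exp (log 2 * (k - 1)) := by
      rw [mul_comm, ← Nat.cast_pred hk, exp_nat_mul, exp_log two_pos]
    _ ≤ exp (t * (k - 1)) := exp_le_exp.2 (mul_le_mul_of_nonneg_right ht hk1)

/-- Modular clipping error bound (Lemma: |M_{[-r,r]}(x) − x| ≤ 2r(e^{(t/2)(x/r−1)} + e^{(t/2)(−x/r−1)})).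
`y` is any valid value of the modular clipping `M_{[-r,r]}(x)`, i.e. `y ∈ [-r,r]` and
`y = x + 2r·n` for some integer `n`. -/
theorem modular_clipping_abs_error (r x t y : ℝ) (hr : 0 < r) (ht : Real.log 2 ≤ t)
    (hy : y ∈ Set.Icc (-r) r) (hmod : ∃ n : ℤ, y = x + 2 * r * n) :
    |y - x| ≤ 2 * r * (Real.exp (t / 2 * (x / r - 1)) + Real.exp (t / 2 * (-x / r - 1))) := by
  obtain ⟨n, rfl⟩ := hmod
  set k := n.natAbs
  have hdist : |x + 2 * r * n - x| = 2 * r * k := by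
    rw [add_sub_cancel_left, abs_mul, abs_of_pos (by positivity), Nat.cast_natAbs, Int.cast_abs]
  have hfar : 2 * r * k ≤ |x| + r := by
    rw [← hdist]
    linarith [abs_sub (x + 2 * r * n) x, abs_le.2 hy]
  have hexponent : t * (k - 1) ≤ t / 2 * (|x| / r - 1) := by
    have hk : 2 * k - 1 ≤ |x| / r := by rw [le_div_iff₀ hr]; linarith
    nlinarith [(log_pos one_lt_two).trans_le ht]
  calc |x + 2 * r * n - x| = 2 * r * k := hdist
    _ ≤ 2 * r * exp (t / 2 * (|x| / r - 1)) := by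
      gcongr
      exact (natCast_le_exp_mul_sub_one ht k).trans (exp_le_exp.2 hexponent)
    _ ≤ _ := by
      gcongr
      exact le_apply_add_apply_neg_of_nonneg (g := fun z ↦ exp (t / 2 * (z / r - 1)))
        (fun _ ↦ (exp_pos _).le) x
end

section
/- Let σ, τ ≥ 1/2. Let X and Y be independent discrete Gaussians N_ℤ(0,σ²) and N_ℤ(0,τ²), and let Z = X + Y and W ~ N_ℤ(0, σ²+τ²). Then sup_{z∈ℤ} |log(P[Z=z]/P[W=z])| ≤ 5·exp(−2π²/(1/σ² + 1/τ²)). -/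
/-!
Completing the square, `x²/A + (z-x)²/B = z²/(A+B) + (x-μ)²/R` with `R = AB/(A+B)` and
`μ = Az/(A+B)`, writes `P[Z = z]` as `P[W = z]` times a ratio of four Gaussian sums over `ℤ`:
one centred at `μ` with variance `R`, and the normalisers for the variances `A`, `B`, `A+B`.
Poisson summation turns a Gaussian sum of variance `v` centred at `μ` into `√(2πv)` times
`cosKernel μ (2πv) = Σₙ exp(-2π²vn²) cos(2πμn) = 1 + O(exp(-2π²v))`. The square roots cancel,
so the log of the ratio is `O(exp(-2π²R))`, and `A, B ≥ 1/4` keeps the constant below `5`.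
-/

/-- The discrete Gaussian probability mass function on `ℤ` with mean 0 and
variance-parameter `v` (i.e. `N_ℤ(0, v)`). -/
noncomputable def discreteGaussianPMF (v : ℝ) (z : ℤ) : ℝ :=
  Real.exp (-(z : ℝ) ^ 2 / (2 * v)) / ∑' y : ℤ, Real.exp (-(y : ℝ) ^ 2 / (2 * v))

/-- Convolution of two mass functions on `ℤ`: the law of `X + Y` for independent `X, Y`. -/
noncomputable def convZ (f g : ℤ → ℝ) (z : ℤ) : ℝ := ∑' x : ℤ, f x * g (z - x)

open Real

lemma exp_neg_mul_succ_sq_le_pow {t : ℝ} (ht : 0 ≤ t) (n : ℕ) :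
    exp (-π * (n + 1) ^ 2 * t) ≤ exp (-(π * t)) ^ (n + 1) := by
  rw [← exp_nat_mul, exp_le_exp]
  push_cast
  have : 0 ≤ π * t * n * (n + 1) := by positivity
  nlinarith

lemma abs_log_le_of_abs_sub_one_le {x d : ℝ} (h : |x - 1| ≤ d) (hd : d < 1) :
    |log x| ≤ d / (1 - d) := by
  obtain ⟨hlo, hhi⟩ := abs_le.mp h
  have hx : 0 < x := by linarith
  have hd₀ : 0 ≤ d := (abs_nonneg _).trans h
  rw [abs_le]
  constructor
  · have h₁ : (1 - x) / x ≤ d / (1 - d) :=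
      div_le_div₀ hd₀ (by linarith) (by linarith) (by linarith)
    rw [sub_div, div_self hx.ne', one_div] at h₁
    linarith [one_sub_inv_le_log_of_pos hx]
  · calc log x ≤ x - 1 := log_le_sub_one_of_pos hx
      _ ≤ d := hhi
      _ ≤ d / (1 - d) := le_div_self hd₀ (by linarith) (by linarith)

lemma exp_neg_add_exp_neg_le {a b : ℝ} (ha : 0 < a) (hb : 0 < b) :
    exp (-a) + exp (-b) ≤ exp (-(a * b / (a + b))) * (1 + exp (-((a + b) / 4))) := by
  wlog hab : a ≤ b generalizing a b
  · rw [add_comm (exp _), add_comm a, mul_comm a]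
    exact this hb ha (le_of_not_ge hab)
  have hab₀ : 0 < a + b := by positivity
  have hfirst : exp (-a) ≤ exp (-(a * b / (a + b))) := by
    rw [exp_le_exp, neg_le_neg_iff, div_le_iff₀ hab₀]
    nlinarith
  have hsecond : exp (-b) ≤ exp (-(a * b / (a + b))) * exp (-((a + b) / 4)) := by
    rw [← exp_add, exp_le_exp]
    have : (a + b) / 4 ≤ b ^ 2 / (a + b) := by
      rw [le_div_iff₀ hab₀]
      nlinarith
    have : b = a * b / (a + b) + b ^ 2 / (a + b) := by field_simp
    linarith
  linarith

lemma exp_neg_pi_sq_div_four_lt : exp (-(π ^ 2 / 4)) < 0.087 := by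
  have hπ : 2.46 < π ^ 2 / 4 := by nlinarith [pi_gt_d2]
  have h : 11.5 < exp 2.46 := by
    have h₁ := exp_one_gt_d9
    have h₂ := quadratic_le_exp_of_nonneg (x := 0.46) (by norm_num)
    have : exp 2.46 = exp 1 * exp 1 * exp 0.46 := by rw [← exp_add, ← exp_add]; norm_num
    rw [this]
    nlinarith [exp_pos 1, exp_pos 0.46]
  calc exp (-(π ^ 2 / 4)) < exp (-2.46) := exp_lt_exp.mpr (by linarith)
    _ = (exp 2.46)⁻¹ := exp_neg _
    _ < 0.087 := by rw [inv_lt_comm₀ (exp_pos _) (by norm_num)]; linarith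

lemma exp_neg_pi_mul_two_pi_mul_add_le {A B : ℝ} (hA : 1 / 4 ≤ A) (hB : 1 / 4 ≤ B) :
    exp (-(π * (2 * π * A))) + exp (-(π * (2 * π * B))) ≤
      exp (-(π * (2 * π * (A * B / (A + B))))) * (1 + 0.087) := by
  have hπ := pi_pos
  have hr : π * (2 * π * A) * (π * (2 * π * B)) / (π * (2 * π * A) + π * (2 * π * B)) =
      π * (2 * π * (A * B / (A + B))) := by
    field_simp
  have hq : exp (-((π * (2 * π * A) + π * (2 * π * B)) / 4)) ≤ 0.087 :=
    (exp_le_exp.mpr (by nlinarith)).trans exp_neg_pi_sq_div_four_lt.le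
  have h := exp_neg_add_exp_neg_le (a := π * (2 * π * A)) (b := π * (2 * π * B))
    (by positivity) (by positivity)
  rw [hr] at h
  exact h.trans (by gcongr)

namespace HurwitzZeta

lemma cosKernel_pos (a : UnitAddCircle) {t : ℝ} (ht : 0 < t) : 0 < cosKernel a t := by
  induction a using QuotientAddGroup.induction_on with | H a =>
  have h := hasSum_int_evenKernel a (t := 1 / t) (by positivity)
  have hpos : 0 < evenKernel a (1 / t) :=
    hasSum_lt (i := 0) (fun n ↦ (exp_pos _).le) (exp_pos _) hasSum_zero h
  rw [evenKernel_functional_equation, one_div_one_div] at hpos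
  exact pos_of_mul_pos_right hpos (by positivity)

lemma one_le_cosKernel_zero {t : ℝ} (ht : 0 < t) : 1 ≤ cosKernel 0 t := by
  have h := hasSum_nat_cosKernel₀ 0 ht
  simp only [QuotientAddGroup.mk_zero, mul_zero, zero_mul, cos_zero, mul_one] at h
  exact sub_nonneg.mp (h.nonneg fun n ↦ by positivity)

lemma abs_cosKernel_sub_one_le (a : UnitAddCircle) {t : ℝ} (ht : 0 < t) :
    |cosKernel a t - 1| ≤ 2 * exp (-(π * t)) / (1 - exp (-(π * t))) := by
  induction a using QuotientAddGroup.induction_on with | H a =>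
  have hx : exp (-(π * t)) < 1 := exp_lt_one_iff.mpr (by nlinarith [pi_pos])
  have hgeom : HasSum (fun n : ℕ ↦ 2 * exp (-(π * t)) ^ (n + 1))
      (2 * exp (-(π * t)) / (1 - exp (-(π * t)))) := by
    simpa [pow_succ, mul_assoc, mul_comm, div_eq_mul_inv] using
      (hasSum_geometric_of_lt_one (exp_pos _).le hx).mul_left (2 * exp (-(π * t)))
  refine (hasSum_nat_cosKernel₀ a ht).norm_le_of_bounded hgeom fun n ↦ ?_
  rw [norm_mul, norm_mul, Real.norm_of_nonneg (exp_pos _).le, Real.norm_two, Real.norm_eq_abs]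
  gcongr
  · exact mul_le_of_le_one_right zero_le_two (abs_cos_le_one _)
  · exact exp_neg_mul_succ_sq_le_pow ht.le n

lemma abs_log_cosKernel_le (a : UnitAddCircle) {t x₀ : ℝ} (ht : 0 < t)
    (hx : exp (-(π * t)) ≤ x₀) (hx₀ : 3 * x₀ < 1) :
    |log (cosKernel a t)| ≤ 2 / (1 - 3 * x₀) * exp (-(π * t)) := by
  have hx₁ : exp (-(π * t)) < 1 := by linarith [exp_pos (-(π * t))]
  have hd : 2 * exp (-(π * t)) / (1 - exp (-(π * t))) < 1 := by
    rw [div_lt_one (by linarith)]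
    linarith
  calc |log (cosKernel a t)| ≤ _ :=
        abs_log_le_of_abs_sub_one_le (abs_cosKernel_sub_one_le a ht) hd
    _ = 2 / (1 - 3 * exp (-(π * t))) * exp (-(π * t)) := by
      generalize exp (-(π * t)) = x at hd hx₁ ⊢
      have : 1 - x ≠ 0 := by linarith
      have : 1 - 3 * x ≠ 0 := by
        rw [div_lt_one (by linarith)] at hd
        linarith
      field_simp
      ring
    _ ≤ 2 / (1 - 3 * x₀) * exp (-(π * t)) := by gcongr

lemma tsum_exp_neg_sub_sq_div (μ : ℝ) {v : ℝ} (hv : 0 < v) :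
    ∑' n : ℤ, exp (-((n : ℝ) - μ) ^ 2 / (2 * v)) = √(2 * π * v) * cosKernel μ (2 * π * v) := by
  have h2πv : 0 < 2 * π * v := by positivity
  have h := (hasSum_int_evenKernel (-μ) (t := 1 / (2 * π * v)) (by positivity)).tsum_eq
  rw [evenKernel_functional_equation, one_div_one_div, QuotientAddGroup.mk_neg, cosKernel_neg,
    div_rpow zero_le_one h2πv.le, one_rpow, one_div_one_div, ← sqrt_eq_rpow] at h
  rw [← h]
  refine tsum_congr fun n ↦ congrArg exp ?_
  field_simp
  ring

lemma tsum_exp_neg_sq_div {v : ℝ} (hv : 0 < v) :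
    ∑' n : ℤ, exp (-(n : ℝ) ^ 2 / (2 * v)) = √(2 * π * v) * cosKernel 0 (2 * π * v) := by
  simpa using tsum_exp_neg_sub_sq_div 0 hv

lemma abs_log_cosKernel_two_pi_mul_le (μ : UnitAddCircle) {R : ℝ} (hR : 1 / 8 ≤ R) :
    |log (cosKernel μ (2 * π * R))| ≤ 2.71 * exp (-(π * (2 * π * R))) := by
  have hx : exp (-(π * (2 * π * R))) ≤ 0.087 :=
    (exp_le_exp.mpr (by nlinarith [pi_pos, sq_nonneg π])).trans exp_neg_pi_sq_div_four_lt.le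
  refine (abs_log_cosKernel_le μ (by positivity) hx (by norm_num)).trans ?_
  gcongr
  norm_num

lemma log_cosKernel_zero_two_pi_mul_le {A : ℝ} (hA : 1 / 4 ≤ A) :
    log (cosKernel 0 (2 * π * A)) ≤ 2.05 * exp (-(π * (2 * π * A))) := by
  have hx : exp (-(π * (2 * π * A))) ≤ 0.0076 :=
    calc exp (-(π * (2 * π * A))) ≤ exp (-(π ^ 2 / 4)) ^ 2 := by
          rw [← exp_nat_mul, exp_le_exp]
          push_cast
          nlinarith [pi_pos, sq_nonneg π]
      _ ≤ 0.0076 := by nlinarith [exp_pos (-(π ^ 2 / 4)), exp_neg_pi_sq_div_four_lt]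
  refine (le_abs_self _).trans <| (abs_log_cosKernel_le 0 (by positivity) hx (by norm_num)).trans ?_
  gcongr
  norm_num

lemma abs_log_cosKernel_ratio_le {A B : ℝ} (hA : 1 / 4 ≤ A) (hB : 1 / 4 ≤ B)
    (μ : UnitAddCircle) :
    |log (cosKernel μ (2 * π * (A * B / (A + B))) * cosKernel 0 (2 * π * (A + B)) /
        (cosKernel 0 (2 * π * A) * cosKernel 0 (2 * π * B)))| ≤
      5 * exp (-(π * (2 * π * (A * B / (A + B))))) := by
  set R := A * B / (A + B)
  have hR : 1 / 8 ≤ R := by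
    rw [le_div_iff₀ (by linarith)]
    nlinarith
  have hRS : R ≤ A + B := by
    rw [div_le_iff₀ (by linarith)]
    nlinarith
  have hSR : exp (-(π * (2 * π * (A + B)))) ≤ exp (-(π * (2 * π * R))) :=
    exp_le_exp.mpr (by gcongr)
  have hAB := exp_neg_pi_mul_two_pi_mul_add_le hA hB
  obtain ⟨hR₁, hR₂⟩ := abs_le.mp (abs_log_cosKernel_two_pi_mul_le μ hR)
  have hA₁ := log_cosKernel_zero_two_pi_mul_le hA
  have hB₁ := log_cosKernel_zero_two_pi_mul_le hB
  have hS₁ := log_cosKernel_zero_two_pi_mul_le (A := A + B) (by linarith)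
  have hA₀ := log_nonneg (one_le_cosKernel_zero (t := 2 * π * A) (by positivity))
  have hB₀ := log_nonneg (one_le_cosKernel_zero (t := 2 * π * B) (by positivity))
  have hS₀ := log_nonneg (one_le_cosKernel_zero (t := 2 * π * (A + B)) (by positivity))
  have hθR := (cosKernel_pos μ (t := 2 * π * R) (by positivity)).ne'
  have hθA := (cosKernel_pos 0 (t := 2 * π * A) (by positivity)).ne'
  have hθB := (cosKernel_pos 0 (t := 2 * π * B) (by positivity)).ne'
  have hθS := (cosKernel_pos 0 (t := 2 * π * (A + B)) (by positivity)).ne'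
  rw [log_div (mul_ne_zero hθR hθS) (mul_ne_zero hθA hθB), log_mul hθR hθS, log_mul hθA hθB,
    abs_le]
  -- The constant: `2.71 + 2.05 ≤ 5` and `2.71 + 2.05 * (1 + 0.087) ≤ 5`.
  constructor <;> linarith

end HurwitzZeta

open HurwitzZeta

lemma exp_neg_sq_div_mul_exp_neg_sq_div {A B : ℝ} (hA : 0 < A) (hB : 0 < B) (x z : ℝ) :
    exp (-x ^ 2 / (2 * A)) * exp (-(z - x) ^ 2 / (2 * B)) =
      exp (-z ^ 2 / (2 * (A + B))) *
        exp (-(x - A * z / (A + B)) ^ 2 / (2 * (A * B / (A + B)))) := by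
  rw [← exp_add, ← exp_add]
  congr 1
  field_simp
  ring

lemma discreteGaussianPMF_pos {v : ℝ} (hv : 0 < v) (z : ℤ) : 0 < discreteGaussianPMF v z := by
  rw [discreteGaussianPMF, tsum_exp_neg_sq_div hv]
  exact div_pos (exp_pos _) (mul_pos (by positivity) (cosKernel_pos 0 (by positivity)))

lemma convZ_discreteGaussianPMF {A B : ℝ} (hA : 0 < A) (hB : 0 < B) (z : ℤ) :
    convZ (discreteGaussianPMF A) (discreteGaussianPMF B) z =
      discreteGaussianPMF (A + B) z *
        (cosKernel (A * z / (A + B) : ℝ) (2 * π * (A * B / (A + B))) *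
            cosKernel 0 (2 * π * (A + B)) /
          (cosKernel 0 (2 * π * A) * cosKernel 0 (2 * π * B))) := by
  have hS : 0 < A + B := by positivity
  have hR : 0 < A * B / (A + B) := by positivity
  have hsqrt : √(2 * π * (A * B / (A + B))) * √(2 * π * (A + B)) =
      √(2 * π * A) * √(2 * π * B) := by
    rw [← sqrt_mul (by positivity), ← sqrt_mul (by positivity)]
    congr 1
    field_simp
  have hθA := (cosKernel_pos 0 (t := 2 * π * A) (by positivity)).ne'
  have hθB := (cosKernel_pos 0 (t := 2 * π * B) (by positivity)).ne'
  have hθS := (cosKernel_pos 0 (t := 2 * π * (A + B)) (by positivity)).ne'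
  simp only [convZ, discreteGaussianPMF, div_mul_div_comm, Int.cast_sub,
    exp_neg_sq_div_mul_exp_neg_sq_div hA hB]
  rw [tsum_div_const, tsum_mul_left, tsum_exp_neg_sub_sq_div _ hR, tsum_exp_neg_sq_div hA,
    tsum_exp_neg_sq_div hB, tsum_exp_neg_sq_div hS, mul_mul_mul_comm √(2 * π * A), ← hsqrt]
  have : 0 < √(2 * π * (A + B)) := by positivity
  have : 0 < √(2 * π * (A * B / (A + B))) := by positivity
  -- Otherwise `field_simp` normalises the kernels' arguments and no longer sees `hθA`, `hθB`, `hθS`.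
  generalize cosKernel 0 (2 * π * A) = θA at hθA ⊢
  generalize cosKernel 0 (2 * π * B) = θB at hθB ⊢
  generalize cosKernel 0 (2 * π * (A + B)) = θS at hθS ⊢
  field_simp

/-- Convolution of two discrete Gaussians: if `X ~ N_ℤ(0,σ²)` and `Y ~ N_ℤ(0,τ²)` are
independent, `Z = X + Y` and `W ~ N_ℤ(0,σ²+τ²)`, then for every `z ∈ ℤ`,
`|log(P[Z=z]/P[W=z])| ≤ 5·exp(−2π²/(1/σ² + 1/τ²))`. -/
theorem convolution_discrete_gaussians_close (σ τ : ℝ) (hσ : 1 / 2 ≤ σ) (hτ : 1 / 2 ≤ τ)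
    (z : ℤ) :
    |Real.log (convZ (discreteGaussianPMF (σ ^ 2)) (discreteGaussianPMF (τ ^ 2)) z /
        discreteGaussianPMF (σ ^ 2 + τ ^ 2) z)| ≤
      5 * Real.exp (-2 * Real.pi ^ 2 / (1 / σ ^ 2 + 1 / τ ^ 2)) := by
  have hA : 1 / 4 ≤ σ ^ 2 := by nlinarith
  have hB : 1 / 4 ≤ τ ^ 2 := by nlinarith
  have hexp : -2 * π ^ 2 / (1 / σ ^ 2 + 1 / τ ^ 2) =
      -(π * (2 * π * (σ ^ 2 * τ ^ 2 / (σ ^ 2 + τ ^ 2)))) := by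
    field_simp
    ring
  rw [convZ_discreteGaussianPMF (by positivity) (by positivity),
    mul_div_cancel_left₀ _ (discreteGaussianPMF_pos (by positivity) z).ne', hexp]
  exact abs_log_cosKernel_ratio_le hA hB _
end

section
/- Let γ > 0, x ∈ ℝ^d, and β ∈ (0,1). For the randomized rounding R_γ(x), P[‖R_γ(x)‖₂² ≤ E[‖R_γ(x)‖₂²] + √(2 log(1/β))·γ·(‖x‖₂ + (γ/2)√d)] ≥ 1 − β. -/
/-!
Write `aᵢ = γ⌊xᵢ/γ⌋`. The coordinate `R(x)ᵢ²` takes only the values `aᵢ²` and `(aᵢ + γ)²`, at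
distance `2γ|aᵢ + γ/2|`, so by Hoeffding's lemma `R(x)ᵢ² - E[R(x)ᵢ²]` is sub-Gaussian with variance
proxy `γ²(aᵢ + γ/2)²`. By independence the centred sum `‖R(x)‖₂² - E[‖R(x)‖₂²]` is sub-Gaussian
with proxy `γ²‖a + γ/2‖₂²`, and since `|aᵢ + γ/2 - xᵢ| ≤ γ/2` the triangle inequality in `ℓ₂` gives
`‖a + γ/2‖₂ ≤ ‖x‖₂ + (γ/2)√d`. The Chernoff bound for sub-Gaussian variables finishes the proof.
-/

open MeasureTheory ProbabilityTheory Real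
open scoped NNReal

lemma abs_mul_floor_div_add_half_sub_le {γ : ℝ} (hγ : 0 < γ) (x : ℝ) :
    |γ * ⌊x / γ⌋ + γ / 2 - x| ≤ γ / 2 := by
  have hx : x = γ * ⌊x / γ⌋ + γ * Int.fract (x / γ) := by
    rw [Int.fract, mul_sub, mul_div_cancel₀ _ hγ.ne']; ring
  have h0 := Int.fract_nonneg (x / γ)
  have h1 := Int.fract_lt_one (x / γ)
  rw [abs_le]
  constructor <;> nlinarith

lemma sqrt_sum_sq_le_add_of_abs_sub_le {ι : Type*} [Fintype ι] {x y : ι → ℝ} {r : ℝ}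
    (h : ∀ i, |y i - x i| ≤ r) :
    √(∑ i, y i ^ 2) ≤ √(∑ i, x i ^ 2) + r * √(Fintype.card ι) := by
  have hnorm (z : ι → ℝ) : ‖WithLp.toLp 2 z‖ = √(∑ i, z i ^ 2) := by
    simp [EuclideanSpace.norm_eq]
  have hdiff : √(∑ i, (y - x) i ^ 2) ≤ r * √(Fintype.card ι) := by
    cases isEmpty_or_nonempty ι
    · simp
    have hr : 0 ≤ r := (abs_nonneg _).trans (h (Classical.arbitrary _))
    calc √(∑ i, (y - x) i ^ 2) ≤ √(∑ _i : ι, r ^ 2) :=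
          sqrt_le_sqrt <| Finset.sum_le_sum fun i _ ↦
            sq_le_sq' (abs_le.1 (h i)).1 (abs_le.1 (h i)).2
      _ = r * √(Fintype.card ι) := by
          rw [Finset.sum_const, Finset.card_univ, nsmul_eq_mul, sqrt_mul (by positivity),
            sqrt_sq hr, mul_comm]
  calc √(∑ i, y i ^ 2) = ‖WithLp.toLp 2 x + WithLp.toLp 2 (y - x)‖ := by
        rw [← WithLp.toLp_add, add_sub_cancel, hnorm]
    _ ≤ _ := (norm_add_le _ _).trans (by rw [hnorm, hnorm]; gcongr)

lemma sqrt_sum_sq_half_abs_sq_sub_sq_floor_le {ι : Type*} [Fintype ι] {γ : ℝ} (hγ : 0 < γ)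
    (x : ι → ℝ) :
    √(∑ i, (|(γ * ⌊x i / γ⌋ + γ) ^ 2 - (γ * ⌊x i / γ⌋) ^ 2| / 2) ^ 2) ≤
      γ * (√(∑ i, x i ^ 2) + γ / 2 * √(Fintype.card ι)) := by
  have hgap (a : ℝ) : (|(a + γ) ^ 2 - a ^ 2| / 2) ^ 2 = γ ^ 2 * (a + γ / 2) ^ 2 := by
    rw [div_pow, sq_abs]; ring
  simp_rw [hgap, ← Finset.mul_sum, sqrt_mul (sq_nonneg γ), sqrt_sq hγ.le]
  gcongr
  exact sqrt_sum_sq_le_add_of_abs_sub_le fun i ↦ abs_mul_floor_div_add_half_sub_le hγ (x i)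

section Probability

variable {Ω : Type*} [MeasurableSpace Ω] {μ : Measure Ω}

lemma hasSubgaussianMGF_sub_integral_of_ae_eq_or_eq [IsProbabilityMeasure μ] {X : Ω → ℝ}
    (hX : AEMeasurable X μ) {u v : ℝ} (huv : ∀ᵐ ω ∂μ, X ω = u ∨ X ω = v) :
    HasSubgaussianMGF (fun ω ↦ X ω - μ[X]) ((‖v - u‖₊ / 2) ^ 2) μ := by
  have h := hasSubgaussianMGF_of_mem_Icc hX (a := min u v) (b := max u v) <| by
    filter_upwards [huv] with ω hω
    rcases hω with hω | hω <;> simp [hω]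
  simpa [max_sub_min_eq_abs] using h

lemma ProbabilityTheory.HasSubgaussianMGF.measureReal_sqrt_mul_lt_le [IsFiniteMeasure μ]
    {X : Ω → ℝ} {c : ℝ≥0} (h : HasSubgaussianMGF X c μ) {β : ℝ} (hβ0 : 0 < β) (hβ1 : β ≤ 1) :
    μ.real {ω | √(2 * log (1 / β)) * √c < X ω} ≤ β := by
  have hL : 0 ≤ log (1 / β) := log_nonneg (one_le_one_div hβ0 hβ1)
  rcases eq_or_ne c 0 with rfl | hc
  · have hnull : μ {ω | 0 < X ω} = 0 :=
      measure_mono_null (fun ω (hω : 0 < X ω) ↦ hω.ne')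
        (ae_iff.1 h.ae_eq_zero_of_hasSubgaussianMGF_zero)
    simp [measureReal_def, hnull, hβ0.le]
  calc μ.real {ω | √(2 * log (1 / β)) * √c < X ω}
      ≤ μ.real {ω | √(2 * log (1 / β)) * √c ≤ X ω} :=
        measureReal_mono fun ω (hω : _ < X ω) ↦ hω.le
    _ ≤ exp (-(√(2 * log (1 / β)) * √c) ^ 2 / (2 * c)) := h.measure_ge_le (by positivity)
    _ = β := by
      rw [mul_pow, sq_sqrt (by positivity), sq_sqrt c.coe_nonneg]
      field_simp
      rw [one_div, log_inv, neg_neg, exp_log hβ0]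

lemma ofReal_one_sub_le_of_measureReal_compl_le [IsProbabilityMeasure μ] {s : Set Ω} {β : ℝ}
    (h : μ.real sᶜ ≤ β) : ENNReal.ofReal (1 - β) ≤ μ s := by
  rw [ENNReal.ofReal_le_iff_le_toReal (measure_ne_top μ s), ← measureReal_def]
  have := measureReal_union_le (μ := μ) s sᶜ
  rw [Set.union_compl_self, probReal_univ] at this
  linarith

end Probability

theorem randomized_rounding_l2_high_prob_general
    {Ω : Type*} [MeasurableSpace Ω] (μ : Measure Ω) [IsProbabilityMeasure μ]
    (d : ℕ) (γ : ℝ) (hγ : 0 < γ) (β : ℝ) (hβ : β ∈ Set.Ioo (0 : ℝ) 1)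
    (x : Fin d → ℝ) (R : Ω → Fin d → ℝ)
    (hmeas : ∀ i, Measurable fun ω => R ω i)
    (hval : ∀ i, ∀ᵐ ω ∂μ,
      R ω i = γ * ⌊x i / γ⌋ ∨ R ω i = γ * ⌊x i / γ⌋ + γ)
    (hindep : iIndepFun
      (fun i ω => R ω i) μ) :
    ENNReal.ofReal (1 - β) ≤
      μ {ω | ∑ i, (R ω i) ^ 2 ≤
        (∫ ω', ∑ i, (R ω' i) ^ 2 ∂μ) +
          Real.sqrt (2 * Real.log (1 / β)) * γ *
            (Real.sqrt (∑ i, (x i) ^ 2) + γ / 2 * Real.sqrt d)} := by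
  set c : Fin d → ℝ≥0 := fun i ↦ (‖(γ * ⌊x i / γ⌋ + γ) ^ 2 - (γ * ⌊x i / γ⌋) ^ 2‖₊ / 2) ^ 2
  set Y : Fin d → Ω → ℝ := fun i ω ↦ R ω i ^ 2 - ∫ ω, R ω i ^ 2 ∂μ
  have hY (i) : HasSubgaussianMGF (Y i) (c i) μ :=
    hasSubgaussianMGF_sub_integral_of_ae_eq_or_eq ((hmeas i).pow_const 2).aemeasurable <| by
      filter_upwards [hval i] with ω hω
      rcases hω with hω | hω <;> simp [hω]
  have hsum : HasSubgaussianMGF (fun ω ↦ ∑ i, Y i ω) (∑ i, c i) μ :=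
    HasSubgaussianMGF.sum_of_iIndepFun
      (hindep.comp (fun i y ↦ y ^ 2 - ∫ ω, R ω i ^ 2 ∂μ) fun _ ↦ by fun_prop) fun i _ ↦ hY i
  have hdev (ω : Ω) : ∑ i, R ω i ^ 2 - ∫ ω', ∑ i, R ω' i ^ 2 ∂μ = ∑ i, Y i ω := by
    rw [integral_finsetSum _ fun i _ ↦ ?_, ← Finset.sum_sub_distrib]
    simpa [Y, sub_eq_add_neg, integrable_add_const_iff] using (hY i).integrable
  have hproxy : √(↑(∑ i, c i)) ≤ γ * (√(∑ i, x i ^ 2) + γ / 2 * √d) := by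
    simpa [c] using sqrt_sum_sq_half_abs_sq_sub_sq_floor_le hγ x
  refine ofReal_one_sub_le_of_measureReal_compl_le <|
    (measureReal_mono fun ω hω ↦ ?_).trans (hsum.measureReal_sqrt_mul_lt_le hβ.1 hβ.2.le)
  simp only [Set.mem_compl_iff, Set.mem_ofPred_eq, not_le] at hω ⊢
  calc √(2 * log (1 / β)) * √(↑(∑ i, c i))
      ≤ √(2 * log (1 / β)) * γ * (√(∑ i, x i ^ 2) + γ / 2 * √d) := by
        rw [mul_assoc]; gcongr
    _ < ∑ i, Y i ω := by linarith [hdev ω]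

/-- High-probability bound on the squared ℓ₂ norm of randomized rounding:
`P[‖R(x)‖₂² ≤ E[‖R(x)‖₂²] + √(2 log(1/β))·γ·(‖x‖₂ + (γ/2)√d)] ≥ 1 − β`. -/
theorem randomized_rounding_l2_high_prob
    {Ω : Type*} [MeasurableSpace Ω] (μ : Measure Ω) [IsProbabilityMeasure μ]
    (d : ℕ) (γ : ℝ) (hγ : 0 < γ) (β : ℝ) (hβ : β ∈ Set.Ioo (0 : ℝ) 1)
    (x : Fin d → ℝ) (R : Ω → Fin d → ℝ)
    (hmeas : ∀ i, Measurable fun ω => R ω i)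
    (hval : ∀ i, ∀ᵐ ω ∂μ,
      R ω i = γ * ⌊x i / γ⌋ ∨ R ω i = γ * ⌊x i / γ⌋ + γ)
    (hprob : ∀ i, μ {ω | R ω i = γ * ⌊x i / γ⌋ + γ} =
      ENNReal.ofReal ((x i - γ * ⌊x i / γ⌋) / γ))
    (hindep : iIndepFun
      (fun i ω => R ω i) μ) :
    ENNReal.ofReal (1 - β) ≤
      μ {ω | ∑ i, (R ω i) ^ 2 ≤
        (∫ ω', ∑ i, (R ω' i) ^ 2 ∂μ) +
          Real.sqrt (2 * Real.log (1 / β)) * γ *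
            (Real.sqrt (∑ i, (x i) ^ 2) + γ / 2 * Real.sqrt d)} :=
  randomized_rounding_l2_high_prob_general μ d γ hγ β hβ x R hmeas hval hindep
end

section
/- Let x ∈ ℝ^d be fixed and let U be a uniformly random rotation (or unitary) matrix, so that Ux is uniform on the sphere of radius ‖x‖₂. Then for every coordinate i and every t ∈ ℝ, E[exp(t·(Ux)_i)] ≤ exp(t²‖x‖₂²/(2d)). -/
/-!
Rotation invariance makes `⟪Y, u⟫` have the same law for every `u` of a given norm, so
`√d · Yᵢ` has the law of `⟪Y, σ⟫` for each of the `2ᵈ` sign vectors `σ ∈ {±1}ᵈ`. Averaging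
`exp (t/√d · ⟪Y, σ⟫)` over all `σ` gives `∏ⱼ cosh (t Yⱼ/√d) ≤ exp (t² ‖Y‖² / (2d))` pointwise.
-/

open MeasureTheory ProbabilityTheory
open scoped RealInnerProductSpace

section Invariance

variable {Ω E : Type*} [MeasurableSpace Ω] {μ : Measure Ω}
  [NormedAddCommGroup E] [InnerProductSpace ℝ E] [MeasurableSpace E] [BorelSpace E]

theorem identDistrib_inner_of_norm_eq {Y : Ω → E} (hY : Measurable Y)
    (hinv : ∀ U : E ≃ₗᵢ[ℝ] E, μ.map (fun ω => U (Y ω)) = μ.map Y) {u v : E} (huv : ‖u‖ = ‖v‖) :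
    IdentDistrib (fun ω => ⟪Y ω, u⟫) (fun ω => ⟪Y ω, v⟫) μ μ := by
  set V := Submodule.reflection (ℝ ∙ (v - u))ᗮ
  have hVv : V v = u := Submodule.reflection_sub huv.symm
  have hYV : IdentDistrib (fun ω => V (Y ω)) Y μ μ :=
    ⟨(V.continuous.measurable.comp hY).aemeasurable, hY.aemeasurable, hinv V⟩
  have hcomp := hYV.comp (u := fun y => ⟪y, u⟫) (continuous_id.inner continuous_const).measurable
  have hV : (fun ω => ⟪Y ω, v⟫) = (fun y => ⟪y, u⟫) ∘ fun ω => V (Y ω) := by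
    ext ω
    rw [Function.comp_apply, ← hVv, LinearIsometryEquiv.inner_map_map]
  exact hV ▸ hcomp.symm

theorem integrable_exp_mul_inner [IsFiniteMeasure μ] {Y : Ω → E} (hY : Measurable Y) {R : ℝ}
    (hR : ∀ᵐ ω ∂μ, ‖Y ω‖ ≤ R) (s : ℝ) (v : E) :
    Integrable (fun ω => Real.exp (s * ⟪Y ω, v⟫)) μ := by
  have hmeas : Measurable fun ω => Real.exp (s * ⟪Y ω, v⟫) :=
    (((continuous_id.inner continuous_const).measurable.comp hY).const_mul s).exp
  refine Integrable.of_bound hmeas.aestronglyMeasurable (Real.exp (|s| * (R * ‖v‖))) ?_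
  filter_upwards [hR] with ω hω
  rw [Real.norm_eq_abs, Real.abs_exp, Real.exp_le_exp]
  calc s * ⟪Y ω, v⟫ ≤ |s| * |⟪Y ω, v⟫| := by rw [← abs_mul]; exact le_abs_self _
    _ ≤ |s| * (R * ‖v‖) := by
      gcongr
      exact (abs_real_inner_le_norm _ _).trans (by gcongr)

end Invariance

section SignVector

variable {ι : Type*} [Fintype ι]

noncomputable def signVector (ε : ι → Bool) : EuclideanSpace ℝ ι :=
  WithLp.toLp 2 fun j => if ε j then 1 else -1

theorem inner_signVector (y : EuclideanSpace ℝ ι) (ε : ι → Bool) :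
    ⟪y, signVector ε⟫ = ∑ j, if ε j then y j else -y j := by
  simp only [PiLp.inner_apply, signVector, RCLike.inner_apply, conj_trivial]
  refine Finset.sum_congr rfl fun j _ => ?_
  split_ifs <;> ring

theorem norm_signVector (ε : ι → Bool) : ‖signVector ε‖ = √(Fintype.card ι) := by
  rw [EuclideanSpace.norm_eq]
  congr 1
  simp [signVector, apply_ite]

theorem sum_exp_mul_inner_signVector [DecidableEq ι] (s : ℝ) (y : EuclideanSpace ℝ ι) :
    ∑ ε : ι → Bool, Real.exp (s * ⟪y, signVector ε⟫)
      = 2 ^ Fintype.card ι * ∏ j, Real.cosh (s * y j) := by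
  calc ∑ ε : ι → Bool, Real.exp (s * ⟪y, signVector ε⟫)
      = ∑ ε : ι → Bool, ∏ j, Real.exp (if ε j then s * y j else -(s * y j)) := by
        refine Finset.sum_congr rfl fun ε _ => ?_
        rw [inner_signVector, Finset.mul_sum, Real.exp_sum]
        refine Finset.prod_congr rfl fun j _ => ?_
        split_ifs <;> ring_nf
    _ = ∏ j, (Real.exp (s * y j) + Real.exp (-(s * y j))) := by
        rw [← Fintype.prod_sum fun j (b : Bool) => Real.exp (if b then s * y j else -(s * y j))]
        simp
    _ = ∏ j, 2 * Real.cosh (s * y j) := by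
        simp_rw [Real.cosh_eq, mul_div_cancel₀ _ (two_ne_zero (α := ℝ))]
    _ = 2 ^ Fintype.card ι * ∏ j, Real.cosh (s * y j) := by
        rw [Finset.prod_mul_distrib, Finset.prod_const, Finset.card_univ]

theorem sum_exp_mul_inner_signVector_le [DecidableEq ι] (s : ℝ) (y : EuclideanSpace ℝ ι) :
    ∑ ε : ι → Bool, Real.exp (s * ⟪y, signVector ε⟫)
      ≤ 2 ^ Fintype.card ι * Real.exp (s ^ 2 * ‖y‖ ^ 2 / 2) := by
  rw [sum_exp_mul_inner_signVector, EuclideanSpace.real_norm_sq_eq, Finset.mul_sum,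
    Finset.sum_div, Real.exp_sum]
  gcongr with j
  exact (Real.cosh_le_exp_half_sq _).trans_eq (by ring_nf)

end SignVector

theorem integral_exp_mul_apply_eq_integral_exp_mul_inner_signVector {Ω ι : Type*}
    [MeasurableSpace Ω] {μ : Measure Ω} [Fintype ι] [DecidableEq ι]
    {Y : Ω → EuclideanSpace ℝ ι} (hY : Measurable Y)
    (hinv : ∀ U : EuclideanSpace ℝ ι ≃ₗᵢ[ℝ] EuclideanSpace ℝ ι,
      μ.map (fun ω => U (Y ω)) = μ.map Y) (i : ι) (t : ℝ) (ε : ι → Bool) :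
    ∫ ω, Real.exp (t * Y ω i) ∂μ
      = ∫ ω, Real.exp (t / √(Fintype.card ι) * ⟪Y ω, signVector ε⟫) ∂μ := by
  set s := t / √(Fintype.card ι)
  have hs : s * √(Fintype.card ι) = t :=
    div_mul_cancel₀ t (Real.sqrt_ne_zero'.mpr (by exact_mod_cast Fintype.card_pos_iff.mpr ⟨i⟩))
  have h := identDistrib_inner_of_norm_eq hY hinv
    (u := EuclideanSpace.single i √(Fintype.card ι)) (v := signVector ε) (by simp [norm_signVector])
  calc ∫ ω, Real.exp (t * Y ω i) ∂μ
      = ∫ ω, Real.exp (s * ⟪Y ω, EuclideanSpace.single i √(Fintype.card ι)⟫) ∂μ := by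
        simp only [EuclideanSpace.inner_single_right, conj_trivial, ← mul_assoc, hs]
    _ = _ := (h.comp (u := fun r => Real.exp (s * r)) (by fun_prop)).integral_eq

/-- Coordinates of a uniformly random point on a sphere are subgaussian:
if `Y` is a random vector whose distribution is uniform on the sphere of radius `‖x‖₂`
(formalized as: `‖Y‖ = ‖x‖` almost surely and the law of `Y` is invariant under every
linear isometry of `ℝ^d`, as is the case for `Y = Ux` with `U` a uniformly random
rotation/unitary matrix), then for every coordinate `i` and every `t ∈ ℝ`,
`E[exp(t·Y_i)] ≤ exp(t²‖x‖₂²/(2d))`. -/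
theorem random_rotation_coordinate_subgaussian
    {Ω : Type*} [MeasurableSpace Ω] (μ : Measure Ω) [IsProbabilityMeasure μ]
    (d : ℕ) (x : EuclideanSpace ℝ (Fin d)) (Y : Ω → EuclideanSpace ℝ (Fin d))
    (hmeas : Measurable Y)
    (hnorm : ∀ᵐ ω ∂μ, ‖Y ω‖ = ‖x‖)
    (hinv : ∀ U : EuclideanSpace ℝ (Fin d) ≃ₗᵢ[ℝ] EuclideanSpace ℝ (Fin d),
      Measure.map (fun ω => U (Y ω)) μ = Measure.map Y μ)
    (i : Fin d) (t : ℝ) :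
    ∫ ω, Real.exp (t * Y ω i) ∂μ ≤ Real.exp (t ^ 2 * ‖x‖ ^ 2 / (2 * d)) := by
  set s := t / √d
  set M := Real.exp (t ^ 2 * ‖x‖ ^ 2 / (2 * d))
  have hcoord ε : ∫ ω, Real.exp (t * Y ω i) ∂μ = ∫ ω, Real.exp (s * ⟪Y ω, signVector ε⟫) ∂μ := by
    simpa using integral_exp_mul_apply_eq_integral_exp_mul_inner_signVector hmeas hinv i t ε
  have hint ε : Integrable (fun ω => Real.exp (s * ⟪Y ω, signVector ε⟫)) μ :=
    integrable_exp_mul_inner hmeas (hnorm.mono fun ω h => h.le) s _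
  have hbound : ∀ᵐ ω ∂μ, ∑ ε : Fin d → Bool, Real.exp (s * ⟪Y ω, signVector ε⟫) ≤ 2 ^ d * M := by
    filter_upwards [hnorm] with ω hω
    convert sum_exp_mul_inner_signVector_le s (Y ω) using 3
    · simp
    · simp [hω, s, div_pow]
      field_simp
  calc ∫ ω, Real.exp (t * Y ω i) ∂μ
      = (2 ^ d)⁻¹ * ∑ ε : Fin d → Bool, ∫ ω, Real.exp (s * ⟪Y ω, signVector ε⟫) ∂μ := by
        simp [← hcoord]
    _ = (2 ^ d)⁻¹ * ∫ ω, ∑ ε : Fin d → Bool, Real.exp (s * ⟪Y ω, signVector ε⟫) ∂μ := by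
        rw [integral_finsetSum _ fun ε _ => hint ε]
    _ ≤ (2 ^ d)⁻¹ * ∫ _ω, 2 ^ d * M ∂μ := by
        refine mul_le_mul_of_nonneg_left ?_ (by positivity)
        exact integral_mono_ae (integrable_finsetSum _ fun ε _ => hint ε) (integrable_const _)
          hbound
    _ = M := by simp
end
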